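/- Let A be a groupoid, let F, G, H be strict automorphisms of A, and suppose there exists a natural transformation 𝟭_A ⟹ F ⋙ G ⋙ H⁻¹ (the functor sending a to H⁻¹(G(F(a)))). Then for every natural transformation σ : 𝟭_A ⟹ 𝟭_A and every object a of A: G(F(σ(F⁻¹(G⁻¹(a))))) = H(σ(H⁻¹(a))) as automorphisms of a. -/
import Mathlib


/-!
Statement 12: Let `F, G, H` be strict automorphisms of a groupoid `A` and suppose
there exists a natural transformation `𝟭_A ⟹ F ⋙ G ⋙ H⁻¹`. Then for every natural
transformation `σ : 𝟭_A ⟹ 𝟭_A` and every object `a`,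
`G(F(σ(F⁻¹(G⁻¹(a))))) = H(σ(H⁻¹(a)))` as automorphisms of `a`.
-/

open CategoryTheory

universe v u

structure GrpdAut (A : Type u) [Groupoid A] where
  F : A ⥤ A
  inv : A ⥤ A
  comp_inv : F ⋙ inv = 𝟭 A
  inv_comp : inv ⋙ F = 𝟭 A

variable {A : Type u} [Groupoid A]

@[simp]
theorem GrpdAut.F_inv_obj (f : GrpdAut A) (a : A) : f.F.obj (f.inv.obj a) = a :=
  Functor.congr_obj f.inv_comp a

@[simp]
theorem GrpdAut.inv_F_obj (f : GrpdAut A) (a : A) : f.inv.obj (f.F.obj a) = a :=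
  Functor.congr_obj f.comp_inv a


theorem central_map (σ : 𝟭 A ⟶ 𝟭 A) {K : A ⥤ A} (τ : 𝟭 A ⟶ K) (a : A) :
    K.map (σ.app a) = σ.app (K.obj a) := by
  have h1 := τ.naturality (σ.app a)
  have h2 := σ.naturality (τ.app a)
  simp only [Functor.id_map] at h1 h2
  exact ((cancel_epi (τ.app a)).1 (h2.trans h1)).symm

/-- If there is a natural transformation
`𝟭_A ⟹ F ⋙ G ⋙ H⁻¹` then for every `σ : 𝟭_A ⟹ 𝟭_A` and every object `a`,
`G(F(σ(F⁻¹(G⁻¹(a))))) = H(σ(H⁻¹(a)))` as automorphisms of `a` (both sides are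
conjugated into `Hom(a,a)` by the strict identifications, recorded by `eqToHom`). -/
theorem conj_eq_of_natTrans_to_comp (A : Type u) [Groupoid A]
    (F G H : GrpdAut A) (hyp : Nonempty (𝟭 A ⟶ F.F ⋙ G.F ⋙ H.inv)) :
    ∀ (σ : 𝟭 A ⟶ 𝟭 A) (a : A),
      eqToHom (show a = G.F.obj (F.F.obj (F.inv.obj (G.inv.obj a))) by simp) ≫
          G.F.map (F.F.map (σ.app (F.inv.obj (G.inv.obj a)))) ≫
          eqToHom (show G.F.obj (F.F.obj (F.inv.obj (G.inv.obj a))) = a by simp) =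
        eqToHom (show a = H.F.obj (H.inv.obj a) by simp) ≫
          H.F.map (σ.app (H.inv.obj a)) ≫
          eqToHom (show H.F.obj (H.inv.obj a) = a by simp) := by
  intro σ a
  obtain ⟨τ⟩ := hyp
  set b := F.inv.obj (G.inv.obj a) with hb
  have key := central_map σ τ b
  have h3 := Functor.congr_hom H.inv_comp (G.F.map (F.F.map (σ.app b)))
  simp only [Functor.comp_map, Functor.id_map] at h3
  simp only [Functor.comp_map] at key
  rw [key] at h3
  have e2 : (F.F ⋙ G.F ⋙ H.inv).obj b = H.inv.obj a := by simp [hb]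
  have hσ := σ.naturality (eqToHom e2)
  simp only [Functor.id_map] at hσ
  have hσ' : σ.app ((F.F ⋙ G.F ⋙ H.inv).obj b) =
      eqToHom e2 ≫ σ.app (H.inv.obj a) ≫ eqToHom e2.symm := by
    rw [← Category.assoc, hσ]; simp
  rw [hσ'] at h3
  simp only [Functor.map_comp, eqToHom_map] at h3
  have main : G.F.map (F.F.map (σ.app b)) =
      eqToHom (show G.F.obj (F.F.obj b) = H.F.obj (H.inv.obj a) by simp [hb]) ≫
      H.F.map (σ.app (H.inv.obj a)) ≫
      eqToHom (show H.F.obj (H.inv.obj a) = G.F.obj (F.F.obj b) by simp [hb]) := by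
    replace h3 := h3.symm
    rw [eqToHom_comp_iff, comp_eqToHom_iff] at h3
    rw [h3]
    simp
  rw [main]
  simp
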